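/- Let n ≥ 2 and T ∈ T_Q with α = max_i (Σ_{r ≤ i} |t_r| − Σ_{r ≤ i'} |t_r|) < 1, and let Q_T be the unique n-quasi-copula with T(Q_T) = Q_T. Then Q_T is a proper n-quasi-copula (not an n-copula) if and only if T has a negative entry. -/
import Mathlib


open Set MeasureTheory
open scoped ENNReal

noncomputable section

/-- An `n`-quasi-copula on `[0,1]ⁿ`. -/
def IsNQuasiCopula (n : ℕ) (Q : (Fin n → ℝ) → ℝ) : Prop :=
  (∀ u : Fin n → ℝ, (∀ j, u j ∈ Icc (0:ℝ) 1) → Q u ∈ Icc (0:ℝ) 1) ∧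
  (∀ u : Fin n → ℝ, (∀ j, u j ∈ Icc (0:ℝ) 1) → (∃ j, u j = 0) → Q u = 0) ∧
  (∀ u : Fin n → ℝ, (∀ j, u j ∈ Icc (0:ℝ) 1) → ∀ k, (∀ j, j ≠ k → u j = 1) → Q u = u k) ∧
  (∀ u v : Fin n → ℝ, (∀ j, u j ∈ Icc (0:ℝ) 1) → (∀ j, v j ∈ Icc (0:ℝ) 1) →
    (∀ j, u j ≤ v j) → Q u ≤ Q v) ∧
  (∀ u v : Fin n → ℝ, (∀ j, u j ∈ Icc (0:ℝ) 1) → (∀ j, v j ∈ Icc (0:ℝ) 1) →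
    |Q u - Q v| ≤ ∑ j, |u j - v j|)

/-- The `Q`-volume of the `n`-box `Π_j [lo j, hi j]`: the standard alternating-sign sum of
`Q` over the vertices of the box. -/
def nVol (n : ℕ) (Q : (Fin n → ℝ) → ℝ) (lo hi : Fin n → ℝ) : ℝ :=
  ∑ ε : Fin n → Bool,
    (-1 : ℝ) ^ (Finset.univ.filter fun j => ε j = false).card *
      Q (fun j => if ε j then hi j else lo j)

/-- An `n`-copula: an `n`-quasi-copula all of whose box volumes are nonnegative. -/
def IsNCopula (n : ℕ) (Q : (Fin n → ℝ) → ℝ) : Prop :=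
  IsNQuasiCopula n Q ∧
  ∀ lo hi : Fin n → ℝ,
    (∀ j, lo j ∈ Icc (0:ℝ) 1 ∧ hi j ∈ Icc (0:ℝ) 1 ∧ lo j ≤ hi j) → 0 ≤ nVol n Q lo hi

/-- The divisions `0 = a_{j,0} < a_{j,1} < ⋯ < a_{j,m_j} = 1` of `[0,1]`. -/
def IsDivision (n : ℕ) (m : Fin n → ℕ) (a : Fin n → ℕ → ℝ) : Prop :=
  (∀ j, 1 ≤ m j) ∧ (∀ j, a j 0 = 0) ∧ (∀ j, a j (m j) = 1) ∧
  (∀ j, ∀ k, k < m j → a j k < a j (k + 1))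

/-- `T ∈ T_Q`: the array `t` consists of the `B`-volumes of the boxes of the division, for
some `n`-quasi-copula `B`.  (Multi-indices are zero-based: the box of index `i` is
`Π_j [a_{j, i j}, a_{j, i j + 1}]`.) -/
def MemTQ (n : ℕ) (m : Fin n → ℕ) (a : Fin n → ℕ → ℝ)
    (t : ((j : Fin n) → Fin (m j)) → ℝ) : Prop :=
  ∃ B : (Fin n → ℝ) → ℝ, IsNQuasiCopula n B ∧
    ∀ i : (j : Fin n) → Fin (m j),
      t i = nVol n B (fun j => a j (i j : ℕ)) (fun j => a j ((i j : ℕ) + 1))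

/-- The `T`-transformation `T(Q)(u) = Σ_i t_i · Q(r_i(u))`. -/
def TApp (n : ℕ) (m : Fin n → ℕ) (a : Fin n → ℕ → ℝ)
    (t : ((j : Fin n) → Fin (m j)) → ℝ) (Q : (Fin n → ℝ) → ℝ) : (Fin n → ℝ) → ℝ :=
  fun u => ∑ i : (j : Fin n) → Fin (m j),
    t i * Q (fun j =>
      max (min ((u j - a j (i j : ℕ)) / (a j ((i j : ℕ) + 1) - a j (i j : ℕ))) 1) 0)

/-- `Σ_{r ≤ i} |t_r| − Σ_{r ≤ i'} |t_r|`, where `r ≤ i` means `r_h ≤ i_h` for all `h` and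
`i'` is obtained from `i` by decreasing every coordinate by one (empty sums are `0`). -/
def alphaTerm (n : ℕ) (m : Fin n → ℕ) (t : ((j : Fin n) → Fin (m j)) → ℝ)
    (i : (j : Fin n) → Fin (m j)) : ℝ :=
  (∑ r ∈ Finset.univ.filter (fun r : (j : Fin n) → Fin (m j) => ∀ h, r h ≤ i h), |t r|) -
  (∑ r ∈ Finset.univ.filter (fun r : (j : Fin n) → Fin (m j) =>
      ∀ h, (r h : ℕ) < (i h : ℕ)), |t r|)

/-- An open `Q`-null box: an `n`-box `Π_j I_j` with each `I_j` a relatively open interval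
of `[0,1]`, such that every closed `n`-box contained in it has zero `Q`-volume. -/
def NOpenQNull (n : ℕ) (Q : (Fin n → ℝ) → ℝ) (B : Set (Fin n → ℝ)) : Prop :=
  (∃ I : Fin n → Set ℝ, B = Set.pi Set.univ I ∧
    ∀ j, (I j).OrdConnected ∧ ∃ U : Set ℝ, IsOpen U ∧ I j = U ∩ Icc 0 1) ∧
  ∀ lo hi : Fin n → ℝ, (∀ j, lo j ≤ hi j) → Set.Icc lo hi ⊆ B → nVol n Q lo hi = 0

/-- The support of an `n`-quasi-copula: the complement in `[0,1]ⁿ` of the union of all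
open `Q`-null boxes. -/
def suppNQ (n : ℕ) (Q : (Fin n → ℝ) → ℝ) : Set (Fin n → ℝ) :=
  {u | ∀ j, u j ∈ Icc (0:ℝ) 1} \ ⋃₀ {B | NOpenQNull n Q B}

/-- A similarity of `ℝⁿ` with ratio `c ∈ (0,1)` (Euclidean distance). -/
def IsSimilarityN (n : ℕ) (c : ℝ) (S : (Fin n → ℝ) → (Fin n → ℝ)) : Prop :=
  0 < c ∧ c < 1 ∧ ∀ x y : Fin n → ℝ,
    Real.sqrt (∑ j, (S x j - S y j) ^ 2) = c * Real.sqrt (∑ j, (x j - y j) ^ 2)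

/-- A self-similar subset of `ℝⁿ`. -/
def IsSelfSimilarN (n : ℕ) (E : Set (Fin n → ℝ)) : Prop :=
  ∃ (k : ℕ) (S : Fin (k + 1) → (Fin n → ℝ) → (Fin n → ℝ)) (c : Fin (k + 1) → ℝ),
    (∀ j, IsSimilarityN n (c j) (S j)) ∧ E = ⋃ j, S j '' E

end

noncomputable section Helpers
open Finset

variable {n : ℕ} {m : Fin n → ℕ} {a : Fin n → ℕ → ℝ}

lemma a_mono (hdiv : IsDivision n m a) (j : Fin n) :
    ∀ l, l ≤ m j → ∀ k, k ≤ l → a j k ≤ a j l := by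
  intro l
  induction l with
  | zero => intro _ k hk; interval_cases k; exact le_rfl
  | succ l ih =>
    intro hl k hk
    rcases Nat.lt_or_ge k (l+1) with h | h
    · exact le_trans (ih (by omega) k (by omega)) (le_of_lt (hdiv.2.2.2 j l (by omega)))
    · have : k = l + 1 := by omega
      subst this; exact le_rfl

lemma a_nonneg (hdiv : IsDivision n m a) (j : Fin n) {k : ℕ} (hk : k ≤ m j) : 0 ≤ a j k := by
  have := a_mono hdiv j k hk 0 (Nat.zero_le _)
  rwa [hdiv.2.1 j] at this

lemma a_le_one (hdiv : IsDivision n m a) (j : Fin n) {k : ℕ} (hk : k ≤ m j) : a j k ≤ 1 := by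
  have := a_mono hdiv j (m j) le_rfl k hk
  rwa [hdiv.2.2.1 j] at this

lemma len_pos (hdiv : IsDivision n m a) (j : Fin n) {q : ℕ} (hq : q < m j) :
    0 < a j (q+1) - a j q := sub_pos.mpr (hdiv.2.2.2 j q hq)

/-- The clip function. -/
def cl (a : Fin n → ℕ → ℝ) (j : Fin n) (q : ℕ) (x : ℝ) : ℝ :=
  max (min ((x - a j q) / (a j (q+1) - a j q)) 1) 0

lemma cl_nonneg (j : Fin n) (q : ℕ) (x : ℝ) : 0 ≤ cl a j q x := le_max_right _ _

lemma cl_le_one (j : Fin n) (q : ℕ) (x : ℝ) : cl a j q x ≤ 1 :=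
  max_le (min_le_right _ _) zero_le_one

lemma cl_mem (j : Fin n) (q : ℕ) (x : ℝ) : cl a j q x ∈ Icc (0:ℝ) 1 :=
  ⟨cl_nonneg j q x, cl_le_one j q x⟩

lemma cl_mono {j : Fin n} {q : ℕ} (hlen : 0 < a j (q+1) - a j q) {x y : ℝ} (hxy : x ≤ y) :
    cl a j q x ≤ cl a j q y := by
  unfold cl
  gcongr

lemma cl_eq_zero {j : Fin n} {q : ℕ} (hlen : 0 < a j (q+1) - a j q) {x : ℝ} (hx : x ≤ a j q) :
    cl a j q x = 0 := by
  unfold cl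
  have h1 : (x - a j q) / (a j (q+1) - a j q) ≤ 0 :=
    div_nonpos_of_nonpos_of_nonneg (by linarith) hlen.le
  exact max_eq_right (le_trans (min_le_left _ _) h1)

lemma cl_eq_one {j : Fin n} {q : ℕ} (hlen : 0 < a j (q+1) - a j q) {x : ℝ}
    (hx : a j (q+1) ≤ x) : cl a j q x = 1 := by
  unfold cl
  rw [min_eq_right (by rw [le_div_iff₀ hlen]; linarith), max_eq_left zero_le_one]

lemma len_mul_cl {j : Fin n} {q : ℕ} (hlen : 0 < a j (q+1) - a j q) (x : ℝ) :
    (a j (q+1) - a j q) * cl a j q x = min x (a j (q+1)) - min x (a j q) := by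
  have hne := ne_of_gt hlen
  rcases le_total x (a j q) with h | h
  · rw [cl_eq_zero hlen h, mul_zero, min_eq_left (by linarith), min_eq_left h]; ring
  · rcases le_total x (a j (q+1)) with h2 | h2
    · have h1 : cl a j q x = (x - a j q) / (a j (q+1) - a j q) := by
        unfold cl
        rw [min_eq_left (by rw [div_le_one hlen]; linarith),
          max_eq_left (div_nonneg (by linarith) hlen.le)]
      rw [h1, mul_div_cancel₀ _ hne, min_eq_left h2, min_eq_right h]
    · rw [cl_eq_one hlen h2, mul_one, min_eq_right h2, min_eq_right (by linarith)]

lemma sign_eq_prod (ε : Fin n → Bool) :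
    ((-1 : ℝ) ^ (Finset.univ.filter fun j => ε j = false).card) =
      ∏ j, (if ε j then (1:ℝ) else -1) := by
  rw [← Finset.prod_filter_mul_prod_filter_not Finset.univ (fun j => ε j = false)
      (fun j => if ε j then (1:ℝ) else -1)]
  have h1 : ∀ j ∈ Finset.univ.filter (fun j => ε j = false),
      (if ε j then (1:ℝ) else -1) = -1 := by
    intro j hj; simp only [Finset.mem_filter] at hj; simp [hj.2]
  have h2 : ∀ j ∈ Finset.univ.filter (fun j => ¬ ε j = false),
      (if ε j then (1:ℝ) else -1) = 1 := by
    intro j hj; simp only [Finset.mem_filter, Bool.not_eq_false] at hj; simp [hj.2]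
  rw [Finset.prod_congr rfl h1, Finset.prod_congr rfl h2, Finset.prod_const,
    Finset.prod_const, one_pow, mul_one]

/-- Partial alternating sum with the `j₀`-coordinate frozen at `x`. -/
def vside (n : ℕ) (Q : (Fin n → ℝ) → ℝ) (lo hi : Fin n → ℝ) (j₀ : Fin n) (x : ℝ) : ℝ :=
  ∑ ε ∈ Finset.univ.filter (fun ε : Fin n → Bool => ε j₀ = true),
    (-1 : ℝ) ^ (Finset.univ.filter fun j => ε j = false).card *
      Q (fun j => if j = j₀ then x else if ε j then hi j else lo j)

lemma vside_update (Q : (Fin n → ℝ) → ℝ) (lo hi : Fin n → ℝ) (j₀ : Fin n) (x y z : ℝ) :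
    vside n Q (Function.update lo j₀ y) (Function.update hi j₀ z) j₀ x =
      vside n Q lo hi j₀ x := by
  apply Finset.sum_congr rfl
  intro ε _
  apply congrArg
  refine congrArg Q (funext fun j => ?_)
  rcases eq_or_ne j j₀ with rfl | hj
  · simp
  · simp [hj, Function.update_of_ne hj]

lemma nVol_eq_sub (Q : (Fin n → ℝ) → ℝ) (lo hi : Fin n → ℝ) (j₀ : Fin n) :
    nVol n Q lo hi = vside n Q lo hi j₀ (hi j₀) - vside n Q lo hi j₀ (lo j₀) := by
  rw [nVol, ← Finset.sum_filter_add_sum_filter_not Finset.univ (fun ε : Fin n → Bool => ε j₀ = true)]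
  have hA : ∑ ε ∈ Finset.univ.filter (fun ε : Fin n → Bool => ε j₀ = true),
      (-1 : ℝ) ^ (Finset.univ.filter fun j => ε j = false).card *
        Q (fun j => if ε j then hi j else lo j) = vside n Q lo hi j₀ (hi j₀) := by
    apply Finset.sum_congr rfl
    intro ε hε
    simp only [Finset.mem_filter, Finset.mem_univ, true_and] at hε
    apply congrArg
    refine congrArg Q (funext fun j => ?_)
    rcases eq_or_ne j j₀ with rfl | hj
    · simp [hε]
    · simp [hj]
  have hB : ∑ ε ∈ Finset.univ.filter (fun ε : Fin n → Bool => ¬ ε j₀ = true),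
      (-1 : ℝ) ^ (Finset.univ.filter fun j => ε j = false).card *
        Q (fun j => if ε j then hi j else lo j) = - vside n Q lo hi j₀ (lo j₀) := by
    rw [vside, ← Finset.sum_neg_distrib]
    apply Finset.sum_nbij' (i := fun ε => Function.update ε j₀ true)
      (j := fun ε => Function.update ε j₀ false)
    · intro ε hε
      simp only [Finset.mem_filter, Finset.mem_univ, true_and]
      simp
    · intro ε hε
      simp only [Finset.mem_filter, Finset.mem_univ, true_and]
      simp
    · intro ε hε
      simp only [Finset.mem_filter, Finset.mem_univ, true_and, Bool.not_eq_true] at hε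
      funext j
      rcases eq_or_ne j j₀ with rfl | hj
      · simp [hε]
      · simp [Function.update_of_ne hj]
    · intro ε hε
      simp only [Finset.mem_filter, Finset.mem_univ, true_and] at hε
      funext j
      rcases eq_or_ne j j₀ with rfl | hj
      · simp [hε]
      · simp [Function.update_of_ne hj]
    · intro ε hε
      simp only [Finset.mem_filter, Finset.mem_univ, true_and, Bool.not_eq_true] at hε
      have hcard : (Finset.univ.filter fun j => ε j = false).card =
          (Finset.univ.filter fun j => (Function.update ε j₀ true) j = false).card + 1 := by
        have hset : (Finset.univ.filter fun j => ε j = false) =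
            insert j₀ (Finset.univ.filter fun j => (Function.update ε j₀ true) j = false) := by
          ext j
          simp only [Finset.mem_filter, Finset.mem_univ, true_and, Finset.mem_insert]
          rcases eq_or_ne j j₀ with rfl | hj
          · simp [hε]
          · simp [hj, Function.update_of_ne hj]
        rw [hset, Finset.card_insert_of_notMem (by simp)]
      rw [hcard, pow_succ]
      have harg : (fun j => if ε j then hi j else lo j) =
          (fun j => if j = j₀ then lo j₀ else if (Function.update ε j₀ true) j then hi j else lo j) := by
        funext j
        rcases eq_or_ne j j₀ with rfl | hj
        · simp [hε]
        · simp [hj, Function.update_of_ne hj]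
      rw [harg]
      ring
  rw [hA, hB]
  ring

lemma nVol_degenerate (Q : (Fin n → ℝ) → ℝ) (lo hi : Fin n → ℝ) (j₀ : Fin n)
    (h : lo j₀ = hi j₀) : nVol n Q lo hi = 0 := by
  rw [nVol_eq_sub Q lo hi j₀, h, sub_self]

lemma nVol_update (Q : (Fin n → ℝ) → ℝ) (lo hi : Fin n → ℝ) (j₀ : Fin n) (x y : ℝ) :
    nVol n Q (Function.update lo j₀ x) (Function.update hi j₀ y) =
      vside n Q lo hi j₀ y - vside n Q lo hi j₀ x := by
  rw [nVol_eq_sub _ _ _ j₀, Function.update_self, Function.update_self,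
    vside_update, vside_update]

end Helpers

noncomputable section Helpers2
open Finset

variable {n : ℕ} {m : Fin n → ℕ} {a : Fin n → ℕ → ℝ}

lemma nVol_tele (Q : (Fin n → ℝ) → ℝ) (lo hi : Fin n → ℝ) (j₀ : Fin n) :
    ∑ b : Fin (m j₀), nVol n Q (Function.update lo j₀ (a j₀ (b:ℕ)))
        (Function.update hi j₀ (a j₀ ((b:ℕ)+1)))
      = nVol n Q (Function.update lo j₀ (a j₀ 0)) (Function.update hi j₀ (a j₀ (m j₀))) := by
  have h1 : ∀ b : Fin (m j₀), nVol n Q (Function.update lo j₀ (a j₀ (b:ℕ)))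
        (Function.update hi j₀ (a j₀ ((b:ℕ)+1)))
      = (fun q : ℕ => vside n Q lo hi j₀ (a j₀ (q+1)) - vside n Q lo hi j₀ (a j₀ q)) (b:ℕ) := by
    intro b; exact nVol_update Q lo hi j₀ _ _
  rw [Finset.sum_congr rfl (fun b _ => h1 b),
    Fin.sum_univ_eq_sum_range (fun q : ℕ => vside n Q lo hi j₀ (a j₀ (q+1)) - vside n Q lo hi j₀ (a j₀ q)) (m j₀),
    Finset.sum_range_sub (fun q : ℕ => vside n Q lo hi j₀ (a j₀ q)) (m j₀),
    nVol_update]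

lemma nVol_slab {Q : (Fin n → ℝ) → ℝ} (hQ : IsNQuasiCopula n Q) (j₀ : Fin n)
    (lo hi : Fin n → ℝ)
    (hlo : ∀ j, j ≠ j₀ → lo j = 0) (hhi : ∀ j, j ≠ j₀ → hi j = 1)
    (hx : lo j₀ ∈ Icc (0:ℝ) 1) (hy : hi j₀ ∈ Icc (0:ℝ) 1) :
    nVol n Q lo hi = hi j₀ - lo j₀ := by
  obtain ⟨hrange, hzero, hbound, hmono, hlip⟩ := hQ
  rw [nVol_eq_sub Q lo hi j₀]
  have hmain : ∀ x : ℝ, x ∈ Icc (0:ℝ) 1 → ∀ ε : Fin n → Bool,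
      ∀ j, (if j = j₀ then x else if ε j then hi j else lo j) ∈ Icc (0:ℝ) 1 := by
    intro x hxI ε j
    rcases eq_or_ne j j₀ with rfl | hj
    · simpa using hxI
    · rw [if_neg hj]
      rcases Bool.eq_false_or_eq_true (ε j) with hb | hb
      · rw [if_pos hb, hhi j hj]
        exact Set.right_mem_Icc.mpr zero_le_one
      · rw [if_neg (by simp [hb]), hlo j hj]
        exact Set.left_mem_Icc.mpr zero_le_one
  have key : ∀ x : ℝ, x ∈ Icc (0:ℝ) 1 → vside n Q lo hi j₀ x = x := by
    intro x hxI
    rw [vside, Finset.sum_eq_single_of_mem (fun _ => true) (by simp)]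
    · have h1 : (Finset.univ.filter fun j : Fin n => ((fun _ => true) j : Bool) = false).card = 0 := by
        simp
      rw [h1, pow_zero, one_mul]
      have hfun : (fun j => if j = j₀ then x else if ((fun _ : Fin n => true) j : Bool) then hi j else lo j)
          = (fun j => if j = j₀ then x else hi j) := by
        funext j; simp
      rw [hfun]
      have hmem : ∀ j, (fun j => if j = j₀ then x else hi j) j ∈ Icc (0:ℝ) 1 := by
        intro j
        show (if j = j₀ then x else hi j) ∈ Icc (0:ℝ) 1
        rcases eq_or_ne j j₀ with rfl | hj
        · simpa using hxI
        · rw [if_neg hj, hhi j hj]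
          exact Set.right_mem_Icc.mpr zero_le_one
      rw [hbound _ hmem j₀ (fun j hj => by rw [if_neg hj, hhi j hj])]
      simp
    · intro ε hε hne
      simp only [Finset.mem_filter, Finset.mem_univ, true_and] at hε
      have hex : ∃ j, ε j = false := by
        by_contra hcon
        push_neg at hcon
        exact hne (funext fun j => by
          have := hcon j
          simpa using this)
      obtain ⟨j, hj⟩ := hex
      have hjj₀ : j ≠ j₀ := by rintro rfl; rw [hε] at hj; cases hj
      have h0 : Q (fun j' => if j' = j₀ then x else if ε j' then hi j' else lo j') = 0 := by
        apply hzero _ (hmain x hxI ε) ⟨j, ?_⟩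
        simp [hjj₀, hj, hlo j hjj₀]
      rw [h0, mul_zero]
  rw [key _ hy, key _ hx]

lemma nVol_unit (hn : 0 < n) {Q : (Fin n → ℝ) → ℝ} (hQ : IsNQuasiCopula n Q) :
    nVol n Q (fun _ => 0) (fun _ => 1) = 1 := by
  have h := nVol_slab hQ ⟨0, hn⟩ (fun _ => 0) (fun _ => 1)
    (fun _ _ => rfl) (fun _ _ => rfl)
    (Set.left_mem_Icc.mpr zero_le_one) (Set.right_mem_Icc.mpr zero_le_one)
  simpa using h

end Helpers2

noncomputable section Helpers3
open Finset

variable {n : ℕ} {m : Fin n → ℕ} {a : Fin n → ℕ → ℝ}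

lemma sum_cells (hdiv : IsDivision n m a) (B : (Fin n → ℝ) → ℝ) (s : Finset (Fin n)) :
    ∀ LO HI : Fin n → ℝ,
    ∑ r ∈ Finset.univ.filter (fun r : (j : Fin n) → Fin (m j) => ∀ j ∉ s, (r j : ℕ) = 0),
      nVol n B (fun j => if j ∈ s then a j (r j : ℕ) else LO j)
               (fun j => if j ∈ s then a j ((r j : ℕ) + 1) else HI j)
    = nVol n B (fun j => if j ∈ s then a j 0 else LO j)
               (fun j => if j ∈ s then a j (m j) else HI j) := by
  classical
  induction s using Finset.induction_on with
  | empty =>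
    intro LO HI
    have hset : Finset.univ.filter
        (fun r : (j : Fin n) → Fin (m j) => ∀ j ∉ (∅ : Finset (Fin n)), (r j : ℕ) = 0) =
        {fun j => ⟨0, hdiv.1 j⟩} := by
      ext r
      simp only [Finset.mem_filter, Finset.mem_univ, true_and, Finset.notMem_empty,
        not_false_iff, forall_true_left, Finset.mem_singleton]
      constructor
      · intro h; funext j; exact Fin.ext (h j)
      · intro h j; subst h; rfl
    rw [hset, Finset.sum_singleton]
    simp
  | @insert j₁ s hj₁ ih =>
    intro LO HI
    set A := Finset.univ.filter
      (fun r : (j : Fin n) → Fin (m j) => ∀ j ∉ insert j₁ s, (r j : ℕ) = 0) with hA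
    rw [← Finset.sum_fiberwise A (fun r => r j₁)]
    set lostar : Fin n → ℝ := fun j => if j ∈ s then a j 0 else LO j with hlostar
    set histar : Fin n → ℝ := fun j => if j ∈ s then a j (m j) else HI j with hhistar
    have hinner : ∀ b : Fin (m j₁),
        ∑ r ∈ A.filter (fun r => r j₁ = b),
          nVol n B (fun j => if j ∈ insert j₁ s then a j (r j : ℕ) else LO j)
                   (fun j => if j ∈ insert j₁ s then a j ((r j : ℕ) + 1) else HI j)
        = nVol n B (Function.update lostar j₁ (a j₁ (b : ℕ)))
                   (Function.update histar j₁ (a j₁ ((b : ℕ) + 1))) := by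
      intro b
      have hre : ∑ r ∈ A.filter (fun r => r j₁ = b),
          nVol n B (fun j => if j ∈ insert j₁ s then a j (r j : ℕ) else LO j)
                   (fun j => if j ∈ insert j₁ s then a j ((r j : ℕ) + 1) else HI j)
        = ∑ r ∈ Finset.univ.filter
            (fun r : (j : Fin n) → Fin (m j) => ∀ j ∉ s, (r j : ℕ) = 0),
          nVol n B (fun j => if j ∈ s then a j (r j : ℕ) else Function.update LO j₁ (a j₁ (b : ℕ)) j)
                   (fun j => if j ∈ s then a j ((r j : ℕ) + 1) else Function.update HI j₁ (a j₁ ((b : ℕ) + 1)) j) := by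
        apply Finset.sum_nbij' (i := fun r => Function.update r j₁ ⟨0, hdiv.1 j₁⟩)
          (j := fun r => Function.update r j₁ b)
        · intro r hr
          simp only [hA, Finset.mem_filter, Finset.mem_univ, true_and] at hr ⊢
          intro j hj
          rcases eq_or_ne j j₁ with rfl | hjne
          · simp
          · rw [Function.update_of_ne hjne]
            exact hr.1 j (by simp [hjne, hj])
        · intro r hr
          simp only [hA, Finset.mem_filter, Finset.mem_univ, true_and] at hr ⊢
          constructor
          · intro j hj
            simp only [Finset.mem_insert, not_or] at hj
            rw [Function.update_of_ne hj.1]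
            exact hr j hj.2
          · simp
        · intro r hr
          simp only [hA, Finset.mem_filter, Finset.mem_univ, true_and] at hr
          rw [Function.update_idem]
          have : b = r j₁ := hr.2.symm
          rw [this, Function.update_eq_self]
        · intro r hr
          simp only [Finset.mem_filter, Finset.mem_univ, true_and] at hr
          rw [Function.update_idem]
          have : (⟨0, hdiv.1 j₁⟩ : Fin (m j₁)) = r j₁ := Fin.ext (hr j₁ hj₁).symm
          rw [this, Function.update_eq_self]
        · intro r hr
          simp only [hA, Finset.mem_filter, Finset.mem_univ, true_and] at hr
          congr 1
          · funext j
            rcases eq_or_ne j j₁ with rfl | hjne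
            · simp [hj₁, hr.2]
            · by_cases hjs : j ∈ s <;>
                simp [hjne, hjs, Function.update_of_ne hjne]
          · funext j
            rcases eq_or_ne j j₁ with rfl | hjne
            · simp [hj₁, hr.2]
            · by_cases hjs : j ∈ s <;>
                simp [hjne, hjs, Function.update_of_ne hjne]
      rw [hre, ih (Function.update LO j₁ (a j₁ (b : ℕ))) (Function.update HI j₁ (a j₁ ((b : ℕ) + 1)))]
      congr 1
      · funext j
        show (if j ∈ s then a j 0 else Function.update LO j₁ (a j₁ (b : ℕ)) j)
            = Function.update lostar j₁ (a j₁ (b : ℕ)) j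
        rcases eq_or_ne j j₁ with rfl | hjne
        · rw [Function.update_self, if_neg hj₁, Function.update_self]
        · rw [Function.update_of_ne hjne, Function.update_of_ne hjne]
      · funext j
        show (if j ∈ s then a j (m j) else Function.update HI j₁ (a j₁ ((b : ℕ) + 1)) j)
            = Function.update histar j₁ (a j₁ ((b : ℕ) + 1)) j
        rcases eq_or_ne j j₁ with rfl | hjne
        · rw [Function.update_self, if_neg hj₁, Function.update_self]
        · rw [Function.update_of_ne hjne, Function.update_of_ne hjne]
    rw [Finset.sum_congr rfl (fun b _ => hinner b), nVol_tele B lostar histar j₁]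
    congr 1
    · funext j
      show Function.update lostar j₁ (a j₁ 0) j = if j ∈ insert j₁ s then a j 0 else LO j
      rcases eq_or_ne j j₁ with rfl | hjne
      · rw [Function.update_self, if_pos (Finset.mem_insert_self _ _)]
      · rw [Function.update_of_ne hjne]
        show (if j ∈ s then a j 0 else LO j) = _
        by_cases hjs : j ∈ s
        · rw [if_pos hjs, if_pos (Finset.mem_insert_of_mem hjs)]
        · rw [if_neg hjs, if_neg (by simp [hjne, hjs])]
    · funext j
      show Function.update histar j₁ (a j₁ (m j₁)) j = if j ∈ insert j₁ s then a j (m j) else HI j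
      rcases eq_or_ne j j₁ with rfl | hjne
      · rw [Function.update_self, if_pos (Finset.mem_insert_self _ _)]
      · rw [Function.update_of_ne hjne]
        show (if j ∈ s then a j (m j) else HI j) = _
        by_cases hjs : j ∈ s
        · rw [if_pos hjs, if_pos (Finset.mem_insert_of_mem hjs)]
        · rw [if_neg hjs, if_neg (by simp [hjne, hjs])]

end Helpers3

noncomputable section Helpers4
open Finset

variable {n : ℕ} {m : Fin n → ℕ} {a : Fin n → ℕ → ℝ}
variable {t : ((j : Fin n) → Fin (m j)) → ℝ} {B : (Fin n → ℝ) → ℝ}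

lemma marg (hdiv : IsDivision n m a) (hB : IsNQuasiCopula n B) (j₀ : Fin n) (b : Fin (m j₀)) :
    ∑ r ∈ Finset.univ.filter (fun r : (j : Fin n) → Fin (m j) => r j₀ = b),
      nVol n B (fun j => a j (r j : ℕ)) (fun j => a j ((r j : ℕ) + 1))
    = a j₀ ((b : ℕ) + 1) - a j₀ (b : ℕ) := by
  classical
  have h := sum_cells hdiv B (Finset.univ.erase j₀)
    (fun _ => a j₀ (b : ℕ)) (fun _ => a j₀ ((b : ℕ) + 1))
  have hre : ∑ r ∈ Finset.univ.filter (fun r : (j : Fin n) → Fin (m j) => r j₀ = b),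
      nVol n B (fun j => a j (r j : ℕ)) (fun j => a j ((r j : ℕ) + 1))
    = ∑ r ∈ Finset.univ.filter
        (fun r : (j : Fin n) → Fin (m j) => ∀ j ∉ Finset.univ.erase j₀, (r j : ℕ) = 0),
      nVol n B (fun j => if j ∈ Finset.univ.erase j₀ then a j (r j : ℕ) else a j₀ (b : ℕ))
               (fun j => if j ∈ Finset.univ.erase j₀ then a j ((r j : ℕ) + 1) else a j₀ ((b : ℕ) + 1)) := by
    apply Finset.sum_nbij' (i := fun r => Function.update r j₀ ⟨0, hdiv.1 j₀⟩)
      (j := fun r => Function.update r j₀ b)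
    · intro r hr
      simp only [Finset.mem_filter, Finset.mem_univ, true_and] at hr ⊢
      intro j hj
      have hjj₀ : j = j₀ := by
        by_contra hcon
        exact hj (Finset.mem_erase.mpr ⟨hcon, Finset.mem_univ j⟩)
      subst hjj₀
      simp
    · intro r hr
      simp only [Finset.mem_filter, Finset.mem_univ, true_and] at hr ⊢
      simp
    · intro r hr
      simp only [Finset.mem_filter, Finset.mem_univ, true_and] at hr
      rw [Function.update_idem, ← hr, Function.update_eq_self]
    · intro r hr
      simp only [Finset.mem_filter, Finset.mem_univ, true_and] at hr
      rw [Function.update_idem]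
      have : (⟨0, hdiv.1 j₀⟩ : Fin (m j₀)) = r j₀ :=
        Fin.ext (hr j₀ (by simp)).symm
      rw [this, Function.update_eq_self]
    · intro r hr
      simp only [Finset.mem_filter, Finset.mem_univ, true_and] at hr
      congr 1
      · funext j
        show a j (r j : ℕ) =
          if j ∈ Finset.univ.erase j₀ then a j ((Function.update r j₀ ⟨0, hdiv.1 j₀⟩ : (j : Fin n) → Fin (m j)) j : ℕ) else a j₀ (b : ℕ)
        rcases eq_or_ne j j₀ with rfl | hjne
        · rw [if_neg (by simp), hr]
        · rw [if_pos (Finset.mem_erase.mpr ⟨hjne, Finset.mem_univ j⟩),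
            Function.update_of_ne hjne]
      · funext j
        show a j ((r j : ℕ) + 1) =
          if j ∈ Finset.univ.erase j₀ then a j (((Function.update r j₀ ⟨0, hdiv.1 j₀⟩ : (j : Fin n) → Fin (m j)) j : ℕ) + 1) else a j₀ ((b : ℕ) + 1)
        rcases eq_or_ne j j₀ with rfl | hjne
        · rw [if_neg (by simp), hr]
        · rw [if_pos (Finset.mem_erase.mpr ⟨hjne, Finset.mem_univ j⟩),
            Function.update_of_ne hjne]
  rw [hre, h]
  have hslab := nVol_slab hB j₀
    (fun j => if j ∈ Finset.univ.erase j₀ then a j 0 else a j₀ (b : ℕ))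
    (fun j => if j ∈ Finset.univ.erase j₀ then a j (m j) else a j₀ ((b : ℕ) + 1))
    (fun j hj => by
      show (if j ∈ Finset.univ.erase j₀ then a j 0 else a j₀ (b : ℕ)) = 0
      rw [if_pos (Finset.mem_erase.mpr ⟨hj, Finset.mem_univ j⟩), hdiv.2.1 j])
    (fun j hj => by
      show (if j ∈ Finset.univ.erase j₀ then a j (m j) else a j₀ ((b : ℕ) + 1)) = 1
      rw [if_pos (Finset.mem_erase.mpr ⟨hj, Finset.mem_univ j⟩), hdiv.2.2.1 j])
    (by
      show (if j₀ ∈ Finset.univ.erase j₀ then a j₀ 0 else a j₀ (b : ℕ)) ∈ Icc (0:ℝ) 1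
      rw [if_neg (by simp)]
      exact ⟨a_nonneg hdiv j₀ b.isLt.le, a_le_one hdiv j₀ b.isLt.le⟩)
    (by
      show (if j₀ ∈ Finset.univ.erase j₀ then a j₀ (m j₀) else a j₀ ((b : ℕ) + 1)) ∈ Icc (0:ℝ) 1
      rw [if_neg (by simp)]
      exact ⟨a_nonneg hdiv j₀ b.isLt, a_le_one hdiv j₀ b.isLt⟩)
  rw [hslab]
  show (if j₀ ∈ Finset.univ.erase j₀ then a j₀ (m j₀) else a j₀ ((b : ℕ) + 1)) -
      (if j₀ ∈ Finset.univ.erase j₀ then a j₀ 0 else a j₀ (b : ℕ)) = _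
  rw [if_neg (by simp), if_neg (by simp)]

end Helpers4

noncomputable section Helpers5
open Finset

variable {n : ℕ} {m : Fin n → ℕ} {a : Fin n → ℕ → ℝ}
variable {t : ((j : Fin n) → Fin (m j)) → ℝ} {B : (Fin n → ℝ) → ℝ}

lemma sum_t_fiber (hdiv : IsDivision n m a) (hB : IsNQuasiCopula n B)
    (htB : ∀ i : (j : Fin n) → Fin (m j),
      t i = nVol n B (fun j => a j (i j : ℕ)) (fun j => a j ((i j : ℕ) + 1)))
    (j₀ : Fin n) (b : Fin (m j₀)) :
    ∑ r ∈ Finset.univ.filter (fun r : (j : Fin n) → Fin (m j) => r j₀ = b), t r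
      = a j₀ ((b : ℕ) + 1) - a j₀ (b : ℕ) := by
  rw [Finset.sum_congr rfl (fun r _ => htB r)]
  exact marg hdiv hB j₀ b

lemma sum_t_weighted (hdiv : IsDivision n m a) (hB : IsNQuasiCopula n B)
    (htB : ∀ i : (j : Fin n) → Fin (m j),
      t i = nVol n B (fun j => a j (i j : ℕ)) (fun j => a j ((i j : ℕ) + 1)))
    (j₀ : Fin n) (w : ℕ → ℝ) :
    ∑ r : (j : Fin n) → Fin (m j), t r * w (r j₀ : ℕ)
      = ∑ b : Fin (m j₀), (a j₀ ((b : ℕ) + 1) - a j₀ (b : ℕ)) * w (b : ℕ) := by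
  rw [← Finset.sum_fiberwise Finset.univ (fun r : (j : Fin n) → Fin (m j) => r j₀)
    (fun r => t r * w (r j₀ : ℕ))]
  apply Finset.sum_congr rfl
  intro b _
  have h1 : ∀ r ∈ Finset.univ.filter (fun r : (j : Fin n) → Fin (m j) => r j₀ = b),
      t r * w (r j₀ : ℕ) = t r * w (b : ℕ) := by
    intro r hr
    simp only [Finset.mem_filter, Finset.mem_univ, true_and] at hr
    rw [hr]
  rw [Finset.sum_congr rfl h1, ← Finset.sum_mul, sum_t_fiber hdiv hB htB]

lemma sum_t_one (hn : 0 < n) (hdiv : IsDivision n m a) (hB : IsNQuasiCopula n B)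
    (htB : ∀ i : (j : Fin n) → Fin (m j),
      t i = nVol n B (fun j => a j (i j : ℕ)) (fun j => a j ((i j : ℕ) + 1))) :
    ∑ r : (j : Fin n) → Fin (m j), t r = 1 := by
  set j₀ : Fin n := ⟨0, hn⟩
  have h := sum_t_weighted hdiv hB htB j₀ (fun _ => 1)
  simp only [mul_one] at h
  rw [h, Fin.sum_univ_eq_sum_range (fun q : ℕ => a j₀ (q + 1) - a j₀ q) (m j₀),
    Finset.sum_range_sub (fun q : ℕ => a j₀ q) (m j₀), hdiv.2.2.1 j₀, hdiv.2.1 j₀]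
  norm_num

lemma sum_t_cl (hdiv : IsDivision n m a) (hB : IsNQuasiCopula n B)
    (htB : ∀ i : (j : Fin n) → Fin (m j),
      t i = nVol n B (fun j => a j (i j : ℕ)) (fun j => a j ((i j : ℕ) + 1)))
    (j₀ : Fin n) {x : ℝ} (hx : x ∈ Set.Icc (0:ℝ) 1) :
    ∑ r : (j : Fin n) → Fin (m j), t r * cl a j₀ (r j₀ : ℕ) x = x := by
  rw [sum_t_weighted hdiv hB htB j₀ (fun q => cl a j₀ q x)]
  have h1 : ∀ b : Fin (m j₀), b ∈ Finset.univ →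
      (a j₀ ((b : ℕ) + 1) - a j₀ (b : ℕ)) * cl a j₀ (b : ℕ) x
        = (fun q : ℕ => min x (a j₀ (q + 1)) - min x (a j₀ q)) (b : ℕ) := by
    intro b _
    exact len_mul_cl (len_pos hdiv j₀ b.isLt) x
  rw [Finset.sum_congr rfl h1,
    Fin.sum_univ_eq_sum_range (fun q : ℕ => min x (a j₀ (q + 1)) - min x (a j₀ q)) (m j₀),
    Finset.sum_range_sub (fun q : ℕ => min x (a j₀ q)) (m j₀), hdiv.2.2.1 j₀, hdiv.2.1 j₀,
    min_eq_left hx.2, min_eq_right hx.1, sub_zero]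

lemma qc_one {Q : (Fin n → ℝ) → ℝ} (hQ : IsNQuasiCopula n Q) (j₀ : Fin n) :
    Q (fun _ => 1) = 1 := by
  have h := hQ.2.2.1 (fun _ => 1)
    (fun j => Set.right_mem_Icc.mpr zero_le_one) j₀ (fun _ _ => rfl)
  simpa using h

lemma exists_cell (hdiv : IsDivision n m a) (j : Fin n) (x : ℝ) (hx : x ∈ Set.Icc (0:ℝ) 1) :
    ∃ q : Fin (m j), a j (q : ℕ) ≤ x ∧ x ≤ a j ((q : ℕ) + 1) := by
  classical
  set P : ℕ → Prop := fun q => a j q ≤ x with hP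
  have h0 : P 0 := by rw [hP]; simp only []; rw [hdiv.2.1 j]; exact hx.1
  set q₀ := Nat.findGreatest P (m j - 1) with hq₀
  have hq₀le : q₀ ≤ m j - 1 := Nat.findGreatest_le _
  have hm1 := hdiv.1 j
  have hq₀lt : q₀ < m j := by omega
  refine ⟨⟨q₀, hq₀lt⟩, Nat.findGreatest_spec (Nat.zero_le _) h0, ?_⟩
  by_cases h : q₀ = m j - 1
  · have he : q₀ + 1 = m j := by omega
    show x ≤ a j (q₀ + 1)
    rw [he, hdiv.2.2.1 j]; exact hx.2
  · have hle : q₀ + 1 ≤ m j - 1 := by omega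
    have hng := Nat.findGreatest_is_greatest (by omega : Nat.findGreatest P (m j - 1) < q₀ + 1) hle
    exact (not_le.mp hng).le

end Helpers5

noncomputable section Helpers6
open Finset

variable {n : ℕ} {m : Fin n → ℕ} {a : Fin n → ℕ → ℝ}
variable {t : ((j : Fin n) → Fin (m j)) → ℝ} {B : (Fin n → ℝ) → ℝ}

lemma TApp_eq (t : ((j : Fin n) → Fin (m j)) → ℝ) (C : (Fin n → ℝ) → ℝ) (u : Fin n → ℝ) :
    TApp n m a t C u = ∑ r : (j : Fin n) → Fin (m j),
      t r * C (fun j => cl a j (r j : ℕ) (u j)) := rfl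

lemma nVol_TApp (t : ((j : Fin n) → Fin (m j)) → ℝ) (C : (Fin n → ℝ) → ℝ)
    (lo hi : Fin n → ℝ) :
    nVol n (TApp n m a t C) lo hi = ∑ r : (j : Fin n) → Fin (m j),
      t r * nVol n C (fun j => cl a j (r j : ℕ) (lo j)) (fun j => cl a j (r j : ℕ) (hi j)) := by
  calc nVol n (TApp n m a t C) lo hi
      = ∑ ε : Fin n → Bool, ∑ r : (j : Fin n) → Fin (m j),
          (-1 : ℝ) ^ (Finset.univ.filter fun j => ε j = false).card *
            (t r * C (fun j => cl a j (r j : ℕ) (if ε j then hi j else lo j))) := by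
        apply Finset.sum_congr rfl
        intro ε _
        rw [TApp_eq, Finset.mul_sum]
    _ = ∑ r : (j : Fin n) → Fin (m j), ∑ ε : Fin n → Bool,
          (-1 : ℝ) ^ (Finset.univ.filter fun j => ε j = false).card *
            (t r * C (fun j => cl a j (r j : ℕ) (if ε j then hi j else lo j))) :=
        Finset.sum_comm
    _ = ∑ r : (j : Fin n) → Fin (m j),
          t r * nVol n C (fun j => cl a j (r j : ℕ) (lo j)) (fun j => cl a j (r j : ℕ) (hi j)) := by
        apply Finset.sum_congr rfl
        intro r _
        rw [nVol, Finset.mul_sum]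
        apply Finset.sum_congr rfl
        intro ε _
        have harg : (fun j => cl a j (r j : ℕ) (if ε j then hi j else lo j)) =
            (fun j => if ε j then cl a j (r j : ℕ) (hi j) else cl a j (r j : ℕ) (lo j)) := by
          funext j
          rcases Bool.eq_false_or_eq_true (ε j) with hb | hb <;> simp [hb]
        rw [harg]
        ring

lemma sum_t_cl_abs (hdiv : IsDivision n m a) (hB : IsNQuasiCopula n B)
    (htB : ∀ i : (j : Fin n) → Fin (m j),
      t i = nVol n B (fun j => a j (i j : ℕ)) (fun j => a j ((i j : ℕ) + 1)))
    (j : Fin n) {x y : ℝ} (hx : x ∈ Set.Icc (0:ℝ) 1) (hy : y ∈ Set.Icc (0:ℝ) 1) :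
    ∑ r : (j : Fin n) → Fin (m j), t r * |cl a j (r j : ℕ) x - cl a j (r j : ℕ) y|
      = |x - y| := by
  have key : ∀ {x y : ℝ}, x ∈ Set.Icc (0:ℝ) 1 → y ∈ Set.Icc (0:ℝ) 1 → y ≤ x →
      ∑ r : (j : Fin n) → Fin (m j), t r * |cl a j (r j : ℕ) x - cl a j (r j : ℕ) y|
        = |x - y| := by
    intro x y hx hy h
    have h1 : ∀ r ∈ (Finset.univ : Finset ((j : Fin n) → Fin (m j))),
        t r * |cl a j (r j : ℕ) x - cl a j (r j : ℕ) y|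
          = t r * cl a j (r j : ℕ) x - t r * cl a j (r j : ℕ) y := by
      intro r _
      rw [abs_of_nonneg (sub_nonneg.mpr (cl_mono (len_pos hdiv j (r j).isLt) h)), mul_sub]
    rw [Finset.sum_congr rfl h1, Finset.sum_sub_distrib, sum_t_cl hdiv hB htB j hx,
      sum_t_cl hdiv hB htB j hy, abs_of_nonneg (sub_nonneg.mpr h)]
  rcases le_total y x with h | h
  · exact key hx hy h
  · have h2 : ∀ r ∈ (Finset.univ : Finset ((j : Fin n) → Fin (m j))),
        t r * |cl a j (r j : ℕ) x - cl a j (r j : ℕ) y|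
          = t r * |cl a j (r j : ℕ) y - cl a j (r j : ℕ) x| := by
      intro r _; rw [abs_sub_comm]
    rw [Finset.sum_congr rfl h2, key hy hx h, abs_sub_comm]

lemma TApp_quasi (hn : 0 < n) (hdiv : IsDivision n m a)
    (ht0 : ∀ r : (j : Fin n) → Fin (m j), 0 ≤ t r) (hB : IsNQuasiCopula n B)
    (htB : ∀ i : (j : Fin n) → Fin (m j),
      t i = nVol n B (fun j => a j (i j : ℕ)) (fun j => a j ((i j : ℕ) + 1)))
    {C : (Fin n → ℝ) → ℝ} (hC : IsNQuasiCopula n C) :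
    IsNQuasiCopula n (TApp n m a t C) := by
  obtain ⟨hCr, hCz, hCb, hCm, hCl⟩ := hC
  have hclmem : ∀ (r : (j : Fin n) → Fin (m j)) (u : Fin n → ℝ) (j : Fin n),
      cl a j (r j : ℕ) (u j) ∈ Set.Icc (0:ℝ) 1 := fun r u j => cl_mem j _ (u j)
  refine ⟨?_, ?_, ?_, ?_, ?_⟩
  · -- range
    intro u hu
    rw [TApp_eq]
    constructor
    · exact Finset.sum_nonneg fun r _ =>
        mul_nonneg (ht0 r) (hCr _ (hclmem r u)).1
    · calc ∑ r : (j : Fin n) → Fin (m j), t r * C (fun j => cl a j (r j : ℕ) (u j))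
          ≤ ∑ r : (j : Fin n) → Fin (m j), t r :=
            Finset.sum_le_sum fun r _ => by
              have := (hCr _ (hclmem r u)).2
              nlinarith [ht0 r]
        _ = 1 := sum_t_one hn hdiv hB htB
  · -- zero
    intro u hu ⟨k, hk⟩
    rw [TApp_eq]
    apply Finset.sum_eq_zero
    intro r _
    have hck : cl a k (r k : ℕ) (u k) = 0 := by
      apply cl_eq_zero (len_pos hdiv k (r k).isLt)
      rw [hk]
      exact a_nonneg hdiv k (r k).isLt.le
    rw [hCz _ (hclmem r u) ⟨k, hck⟩, mul_zero]
  · -- boundary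
    intro u hu k hk1
    rw [TApp_eq]
    have h1 : ∀ r : (j : Fin n) → Fin (m j),
        C (fun j => cl a j (r j : ℕ) (u j)) = cl a k (r k : ℕ) (u k) := by
      intro r
      have h2 := hCb _ (hclmem r u) k (fun j hj => by
        show cl a j (r j : ℕ) (u j) = 1
        apply cl_eq_one (len_pos hdiv j (r j).isLt)
        rw [hk1 j hj]
        exact a_le_one hdiv j (r j).isLt)
      exact h2
    rw [Finset.sum_congr rfl (fun r _ => by rw [h1 r])]
    exact sum_t_cl hdiv hB htB k (hu k)
  · -- monotone
    intro u v hu hv huv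
    rw [TApp_eq, TApp_eq]
    apply Finset.sum_le_sum
    intro r _
    apply mul_le_mul_of_nonneg_left _ (ht0 r)
    exact hCm _ _ (hclmem r u) (hclmem r v)
      (fun j => cl_mono (len_pos hdiv j (r j).isLt) (huv j))
  · -- Lipschitz
    intro u v hu hv
    rw [TApp_eq, TApp_eq, ← Finset.sum_sub_distrib]
    have hstep1 : |∑ r : (j : Fin n) → Fin (m j),
        (t r * C (fun j => cl a j (r j : ℕ) (u j)) - t r * C (fun j => cl a j (r j : ℕ) (v j)))|
        ≤ ∑ r : (j : Fin n) → Fin (m j),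
            t r * ∑ j, |cl a j (r j : ℕ) (u j) - cl a j (r j : ℕ) (v j)| := by
      refine le_trans (Finset.abs_sum_le_sum_abs _ _) (Finset.sum_le_sum fun r _ => ?_)
      rw [← mul_sub, abs_mul, abs_of_nonneg (ht0 r)]
      exact mul_le_mul_of_nonneg_left (hCl _ _ (hclmem r u) (hclmem r v)) (ht0 r)
    refine le_trans hstep1 (le_of_eq ?_)
    calc ∑ r : (j : Fin n) → Fin (m j),
          t r * ∑ j, |cl a j (r j : ℕ) (u j) - cl a j (r j : ℕ) (v j)|
        = ∑ r : (j : Fin n) → Fin (m j), ∑ j,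
            t r * |cl a j (r j : ℕ) (u j) - cl a j (r j : ℕ) (v j)| := by
          exact Finset.sum_congr rfl fun r _ => Finset.mul_sum _ _ _
      _ = ∑ j, ∑ r : (j : Fin n) → Fin (m j),
            t r * |cl a j (r j : ℕ) (u j) - cl a j (r j : ℕ) (v j)| := Finset.sum_comm
      _ = ∑ j, |u j - v j| := Finset.sum_congr rfl fun j _ =>
            sum_t_cl_abs hdiv hB htB j (hu j) (hv j)

end Helpers6

noncomputable section Helpers7
open Finset

variable {n : ℕ} {m : Fin n → ℕ} {a : Fin n → ℕ → ℝ}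
variable {t : ((j : Fin n) → Fin (m j)) → ℝ}

lemma TApp_nonnegVol (hdiv : IsDivision n m a)
    (ht0 : ∀ r : (j : Fin n) → Fin (m j), 0 ≤ t r)
    {C : (Fin n → ℝ) → ℝ}
    (hCv : ∀ lo hi : Fin n → ℝ,
      (∀ j, lo j ∈ Set.Icc (0:ℝ) 1 ∧ hi j ∈ Set.Icc (0:ℝ) 1 ∧ lo j ≤ hi j) →
        0 ≤ nVol n C lo hi)
    (lo hi : Fin n → ℝ)
    (h : ∀ j, lo j ∈ Set.Icc (0:ℝ) 1 ∧ hi j ∈ Set.Icc (0:ℝ) 1 ∧ lo j ≤ hi j) :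
    0 ≤ nVol n (TApp n m a t C) lo hi := by
  rw [nVol_TApp]
  apply Finset.sum_nonneg
  intro r _
  apply mul_nonneg (ht0 r)
  apply hCv
  intro j
  exact ⟨cl_mem j _ _, cl_mem j _ _,
    cl_mono (len_pos hdiv j (r j).isLt) (h j).2.2⟩

lemma prod_lip : ∀ (s : Finset (Fin n)) (u v : Fin n → ℝ),
    (∀ j, u j ∈ Set.Icc (0:ℝ) 1) → (∀ j, v j ∈ Set.Icc (0:ℝ) 1) →
    |∏ j ∈ s, u j - ∏ j ∈ s, v j| ≤ ∑ j ∈ s, |u j - v j| := by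
  intro s
  induction s using Finset.induction_on with
  | empty => intro u v _ _; simp
  | @insert k s hk ih =>
    intro u v hu hv
    rw [Finset.prod_insert hk, Finset.prod_insert hk, Finset.sum_insert hk]
    have hkey : u k * ∏ j ∈ s, u j - v k * ∏ j ∈ s, v j
        = u k * (∏ j ∈ s, u j - ∏ j ∈ s, v j) + (u k - v k) * ∏ j ∈ s, v j := by ring
    rw [hkey]
    refine le_trans (abs_add_le _ _) ?_
    rw [abs_mul, abs_mul]
    have h1 : |u k| ≤ 1 := abs_le.mpr ⟨by linarith [(hu k).1], (hu k).2⟩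
    have h2 : |∏ j ∈ s, v j| ≤ 1 := by
      rw [abs_of_nonneg (Finset.prod_nonneg fun j _ => (hv j).1)]
      exact Finset.prod_le_one (fun j _ => (hv j).1) (fun j _ => (hv j).2)
    have h3 := ih u v hu hv
    have h4 : (0:ℝ) ≤ |∏ j ∈ s, u j - ∏ j ∈ s, v j| := abs_nonneg _
    have h5 : (0:ℝ) ≤ |u k - v k| := abs_nonneg _
    nlinarith

lemma prod_quasi : IsNQuasiCopula n (fun u => ∏ j, u j) := by
  refine ⟨?_, ?_, ?_, ?_, ?_⟩
  · intro u hu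
    exact ⟨Finset.prod_nonneg fun j _ => (hu j).1,
      Finset.prod_le_one (fun j _ => (hu j).1) (fun j _ => (hu j).2)⟩
  · intro u _ ⟨j, hj⟩
    exact Finset.prod_eq_zero (Finset.mem_univ j) hj
  · intro u _ k hk
    exact Finset.prod_eq_single k (fun j _ hj => hk j hj) (by simp)
  · intro u v hu _ huv
    exact Finset.prod_le_prod (fun j _ => (hu j).1) (fun j _ => huv j)
  · intro u v hu hv
    exact prod_lip Finset.univ u v hu hv

lemma nVol_prod (lo hi : Fin n → ℝ) :
    nVol n (fun u => ∏ j, u j) lo hi = ∏ j, (hi j - lo j) := by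
  classical
  symm
  have h1 : ∀ j : Fin n, hi j - lo j = ∑ b ∈ (Finset.univ : Finset Bool),
      (if b then hi j else -lo j) := by
    intro j; rw [Fintype.sum_bool]; simp [sub_eq_add_neg]
  calc ∏ j, (hi j - lo j)
      = ∏ j, ∑ b ∈ (Finset.univ : Finset Bool), (if b then hi j else -lo j) :=
        Finset.prod_congr rfl fun j _ => h1 j
    _ = ∑ ε ∈ Fintype.piFinset (fun _ : Fin n => (Finset.univ : Finset Bool)),
          ∏ j, (if ε j then hi j else -lo j) := Finset.prod_univ_sum _ _
    _ = ∑ ε : Fin n → Bool, ∏ j, (if ε j then hi j else -lo j) := by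
        rw [Fintype.piFinset_univ]
    _ = nVol n (fun u => ∏ j, u j) lo hi := by
        rw [nVol]
        apply Finset.sum_congr rfl
        intro ε _
        rw [sign_eq_prod, ← Finset.prod_mul_distrib]
        apply Finset.prod_congr rfl
        intro j _
        rcases Bool.eq_false_or_eq_true (ε j) with hb | hb <;> simp [hb]

end Helpers7

noncomputable section MainParts
open Finset

variable {n : ℕ} {m : Fin n → ℕ} {a : Fin n → ℕ → ℝ}
variable {t : ((j : Fin n) → Fin (m j)) → ℝ}

lemma dir1 (hn : 2 ≤ n) (hdiv : IsDivision n m a) {Q : (Fin n → ℝ) → ℝ}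
    (hQ : IsNQuasiCopula n Q)
    (hfix : ∀ u : Fin n → ℝ, (∀ j, u j ∈ Set.Icc (0:ℝ) 1) → TApp n m a t Q u = Q u)
    (i₀ : (j : Fin n) → Fin (m j)) (hneg : t i₀ < 0) : ¬ IsNCopula n Q := by
  intro hcop
  have hn0 : 0 < n := by omega
  set lo : Fin n → ℝ := fun j => a j (i₀ j : ℕ) with hlo
  set hi : Fin n → ℝ := fun j => a j ((i₀ j : ℕ) + 1) with hhi
  have hmemcell : ∀ j, lo j ∈ Set.Icc (0:ℝ) 1 ∧ hi j ∈ Set.Icc (0:ℝ) 1 ∧ lo j ≤ hi j := by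
    intro j
    refine ⟨⟨a_nonneg hdiv j (i₀ j).isLt.le, a_le_one hdiv j (i₀ j).isLt.le⟩,
      ⟨a_nonneg hdiv j (i₀ j).isLt, a_le_one hdiv j (i₀ j).isLt⟩, ?_⟩
    exact (hdiv.2.2.2 j _ (i₀ j).isLt).le
  have heq : nVol n Q lo hi = nVol n (TApp n m a t Q) lo hi := by
    rw [nVol, nVol]
    apply Finset.sum_congr rfl
    intro ε _
    apply congrArg
    refine (hfix _ ?_).symm
    intro j
    rcases Bool.eq_false_or_eq_true (ε j) with hb | hb
    · rw [if_pos hb]; exact (hmemcell j).2.1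
    · rw [if_neg (by simp [hb])]; exact (hmemcell j).1
  rw [nVol_TApp] at heq
  have hsingle : ∑ r : (j : Fin n) → Fin (m j),
      t r * nVol n Q (fun j => cl a j (r j : ℕ) (lo j)) (fun j => cl a j (r j : ℕ) (hi j))
      = t i₀ := by
    rw [Finset.sum_eq_single_of_mem i₀ (Finset.mem_univ _)]
    · have hlo1 : (fun j => cl a j (i₀ j : ℕ) (lo j)) = fun _ => (0:ℝ) := by
        funext j
        exact cl_eq_zero (len_pos hdiv j (i₀ j).isLt) le_rfl
      have hhi1 : (fun j => cl a j (i₀ j : ℕ) (hi j)) = fun _ => (1:ℝ) := by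
        funext j
        exact cl_eq_one (len_pos hdiv j (i₀ j).isLt) le_rfl
      rw [hlo1, hhi1, nVol_unit hn0 hQ, mul_one]
    · intro r _ hr
      obtain ⟨j, hj⟩ := Function.ne_iff.mp hr
      rcases hj.lt_or_gt with hlt | hlt
      · -- r j < i₀ j : both clips are 1
        have h1 : (r j : ℕ) + 1 ≤ (i₀ j : ℕ) := Fin.lt_def.mp hlt
        have hclo : cl a j (r j : ℕ) (lo j) = 1 := by
          apply cl_eq_one (len_pos hdiv j (r j).isLt)
          exact a_mono hdiv j (i₀ j : ℕ) (i₀ j).isLt.le _ h1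
        have hchi : cl a j (r j : ℕ) (hi j) = 1 := by
          apply cl_eq_one (len_pos hdiv j (r j).isLt)
          exact a_mono hdiv j ((i₀ j : ℕ) + 1) (i₀ j).isLt _ (by omega)
        rw [nVol_degenerate Q _ _ j (by rw [hclo, hchi]), mul_zero]
      · -- i₀ j < r j : both clips are 0
        have h1 : (i₀ j : ℕ) + 1 ≤ (r j : ℕ) := Fin.lt_def.mp hlt
        have hclo : cl a j (r j : ℕ) (lo j) = 0 := by
          apply cl_eq_zero (len_pos hdiv j (r j).isLt)
          exact a_mono hdiv j (r j : ℕ) (r j).isLt.le _ (by omega)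
        have hchi : cl a j (r j : ℕ) (hi j) = 0 := by
          apply cl_eq_zero (len_pos hdiv j (r j).isLt)
          exact a_mono hdiv j (r j : ℕ) (r j).isLt.le _ h1
        rw [nVol_degenerate Q _ _ j (by rw [hclo, hchi]), mul_zero]
  have hnonneg := hcop.2 lo hi hmemcell
  rw [heq, hsingle] at hnonneg
  linarith

lemma dir2 (hn : 2 ≤ n) (hdiv : IsDivision n m a)
    (hT : MemTQ n m a t) {α : ℝ}
    (hα : IsGreatest {x : ℝ | ∃ i : (j : Fin n) → Fin (m j), x = alphaTerm n m t i} α)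
    (hα1 : α < 1) {Q : (Fin n → ℝ) → ℝ} (hQ : IsNQuasiCopula n Q)
    (hfix : ∀ u : Fin n → ℝ, (∀ j, u j ∈ Set.Icc (0:ℝ) 1) → TApp n m a t Q u = Q u)
    (ht0 : ∀ r : (j : Fin n) → Fin (m j), 0 ≤ t r) : IsNCopula n Q := by
  classical
  obtain ⟨B, hB, htB⟩ := hT
  have hn0 : 0 < n := by omega
  have hα0 : 0 ≤ α := by
    obtain ⟨i₀, hi₀⟩ := hα.1
    rw [hi₀, alphaTerm, sub_nonneg]
    apply Finset.sum_le_sum_of_subset_of_nonneg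
    · intro r hr
      simp only [Finset.mem_filter, Finset.mem_univ, true_and] at hr ⊢
      intro h
      exact Fin.le_def.mpr (le_of_lt (hr h))
    · intro r _ _; exact abs_nonneg _
  set C₀ : (Fin n → ℝ) → ℝ := fun u => ∏ j, u j with hC₀
  set Tk : ℕ → (Fin n → ℝ) → ℝ := fun k => (TApp n m a t)^[k] C₀ with hTkdef
  have hTksucc : ∀ k, Tk (k+1) = TApp n m a t (Tk k) := fun k =>
    Function.iterate_succ_apply' _ _ _
  have hTkQC : ∀ k, IsNQuasiCopula n (Tk k) := by
    intro k
    induction k with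
    | zero => exact prod_quasi
    | succ k ih => rw [hTksucc]; exact TApp_quasi hn0 hdiv ht0 hB htB ih
  have hTkVol : ∀ k (lo hi : Fin n → ℝ),
      (∀ j, lo j ∈ Set.Icc (0:ℝ) 1 ∧ hi j ∈ Set.Icc (0:ℝ) 1 ∧ lo j ≤ hi j) →
      0 ≤ nVol n (Tk k) lo hi := by
    intro k
    induction k with
    | zero =>
      intro lo hi h
      rw [show Tk 0 = (fun u => ∏ j, u j) from rfl, nVol_prod]
      exact Finset.prod_nonneg fun j _ => sub_nonneg.mpr (h j).2.2
    | succ k ih =>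
      intro lo hi h
      rw [hTksucc]
      exact TApp_nonnegVol hdiv ht0 ih lo hi h
  have hcontr : ∀ k (u : Fin n → ℝ), (∀ j, u j ∈ Set.Icc (0:ℝ) 1) →
      |Q u - Tk k u| ≤ α ^ k := by
    intro k
    induction k with
    | zero =>
      intro u hu
      rw [pow_zero]
      have h1 := hQ.1 u hu
      have h2 := (hTkQC 0).1 u hu
      exact abs_le.mpr ⟨by linarith [h1.1, h2.2], by linarith [h1.2, h2.1]⟩
    | succ k ih =>
      intro u hu
      choose i hia hib using fun j => exists_cell hdiv j (u j) (hu j)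
      rw [hTksucc, ← hfix u hu, TApp_eq, TApp_eq, ← Finset.sum_sub_distrib]
      set d : ((j : Fin n) → Fin (m j)) → ℝ := fun r =>
        Q (fun j => cl a j (r j : ℕ) (u j)) - Tk k (fun j => cl a j (r j : ℕ) (u j)) with hd
      set A := Finset.univ.filter (fun r : (j : Fin n) → Fin (m j) =>
        (∀ h, r h ≤ i h) ∧ ¬ ∀ h, (r h : ℕ) < (i h : ℕ)) with hA'
      have hzero1 : ∀ r : (j : Fin n) → Fin (m j), ¬ (∀ h, r h ≤ i h) → d r = 0 := by
        intro r hr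
        push_neg at hr
        obtain ⟨h, hh⟩ := hr
        have hlt : (i h : ℕ) < (r h : ℕ) := Fin.lt_def.mp hh
        have hcl0 : cl a h (r h : ℕ) (u h) = 0 := by
          apply cl_eq_zero (len_pos hdiv h (r h).isLt)
          calc u h ≤ a h ((i h : ℕ) + 1) := hib h
            _ ≤ a h (r h : ℕ) := a_mono hdiv h (r h : ℕ) (r h).isLt.le _ (by omega)
        rw [hd]
        simp only []
        rw [hQ.2.1 (fun j => cl a j (r j : ℕ) (u j)) (fun j => cl_mem j _ _) ⟨h, hcl0⟩,
          (hTkQC k).2.1 (fun j => cl a j (r j : ℕ) (u j)) (fun j => cl_mem j _ _) ⟨h, hcl0⟩,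
          sub_self]
      have hzero2 : ∀ r : (j : Fin n) → Fin (m j), (∀ h, (r h : ℕ) < (i h : ℕ)) → d r = 0 := by
        intro r hr
        have hcl1 : (fun j => cl a j (r j : ℕ) (u j)) = fun _ => (1:ℝ) := by
          funext j
          apply cl_eq_one (len_pos hdiv j (r j).isLt)
          calc a j ((r j : ℕ) + 1) ≤ a j (i j : ℕ) :=
              a_mono hdiv j (i j : ℕ) (i j).isLt.le _ (by have := hr j; omega)
            _ ≤ u j := hia j
        rw [hd]
        simp only []
        rw [hcl1, qc_one hQ ⟨0, hn0⟩, qc_one (hTkQC k) ⟨0, hn0⟩, sub_self]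
      have hAt : ∑ r ∈ A, |t r| = alphaTerm n m t i := by
        have hss : Finset.univ.filter (fun r : (j : Fin n) → Fin (m j) =>
              ∀ h, (r h : ℕ) < (i h : ℕ))
            = (Finset.univ.filter (fun r : (j : Fin n) → Fin (m j) => ∀ h, r h ≤ i h)).filter
                (fun r => ∀ h, (r h : ℕ) < (i h : ℕ)) := by
          rw [Finset.filter_filter]
          apply Finset.filter_congr
          intro r _
          constructor
          · intro hlt
            exact ⟨fun h => Fin.le_def.mpr (le_of_lt (hlt h)), hlt⟩
          · exact fun h => h.2
        have hadd := Finset.sum_filter_add_sum_filter_not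
          (Finset.univ.filter (fun r : (j : Fin n) → Fin (m j) => ∀ h, r h ≤ i h))
          (fun r => ∀ h, (r h : ℕ) < (i h : ℕ)) (fun r => |t r|)
        have hAeq : A = (Finset.univ.filter
            (fun r : (j : Fin n) → Fin (m j) => ∀ h, r h ≤ i h)).filter
              (fun r => ¬ ∀ h, (r h : ℕ) < (i h : ℕ)) := by
          rw [hA', Finset.filter_filter]
        rw [hAeq, alphaTerm, hss]
        linarith [hadd]
      have hsub : ∑ r : (j : Fin n) → Fin (m j),
          (t r * Q (fun j => cl a j (r j : ℕ) (u j))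
            - t r * Tk k (fun j => cl a j (r j : ℕ) (u j)))
          = ∑ r ∈ A, t r * d r := by
        rw [Finset.sum_congr rfl (fun r (_ : r ∈ Finset.univ) => by
          show _ = t r * d r
          rw [hd]; ring)]
        symm
        apply Finset.sum_subset (Finset.filter_subset _ _)
        intro r _ hr
        simp only [hA', Finset.mem_filter, Finset.mem_univ, true_and, not_and, not_not] at hr
        by_cases hP : ∀ h, r h ≤ i h
        · rw [hzero2 r (hr hP), mul_zero]
        · rw [hzero1 r hP, mul_zero]
      rw [hsub]
      calc |∑ r ∈ A, t r * d r|
          ≤ ∑ r ∈ A, |t r * d r| := Finset.abs_sum_le_sum_abs _ _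
        _ ≤ ∑ r ∈ A, |t r| * α ^ k := by
            apply Finset.sum_le_sum
            intro r _
            rw [abs_mul]
            apply mul_le_mul_of_nonneg_left _ (abs_nonneg _)
            exact ih _ (fun j => cl_mem j _ _)
        _ = (∑ r ∈ A, |t r|) * α ^ k := (Finset.sum_mul _ _ _).symm
        _ ≤ α * α ^ k := by
            apply mul_le_mul_of_nonneg_right _ (pow_nonneg hα0 k)
            rw [hAt]
            exact hα.2 ⟨i, rfl⟩
        _ = α ^ (k+1) := (pow_succ' α k).symm
  refine ⟨hQ, ?_⟩
  intro lo hi hbox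
  have hverts : ∀ (ε : Fin n → Bool) (j : Fin n),
      (if ε j then hi j else lo j) ∈ Set.Icc (0:ℝ) 1 := by
    intro ε j
    rcases Bool.eq_false_or_eq_true (ε j) with hb | hb
    · rw [if_pos hb]; exact (hbox j).2.1
    · rw [if_neg (by simp [hb])]; exact (hbox j).1
  have hVdiff : ∀ k, |nVol n Q lo hi - nVol n (Tk k) lo hi| ≤ 2^n * α^k := by
    intro k
    rw [nVol, nVol, ← Finset.sum_sub_distrib]
    refine le_trans (Finset.abs_sum_le_sum_abs _ _) ?_
    have hcard : (Finset.univ : Finset (Fin n → Bool)).card = 2^n := by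
      rw [Finset.card_univ, Fintype.card_fun]
      simp
    calc ∑ ε : Fin n → Bool,
          |(-1:ℝ) ^ (Finset.univ.filter fun j => ε j = false).card *
              Q (fun j => if ε j then hi j else lo j)
            - (-1:ℝ) ^ (Finset.univ.filter fun j => ε j = false).card *
              Tk k (fun j => if ε j then hi j else lo j)|
        = ∑ ε : Fin n → Bool, |Q (fun j => if ε j then hi j else lo j)
            - Tk k (fun j => if ε j then hi j else lo j)| := by
          apply Finset.sum_congr rfl
          intro ε _
          rw [← mul_sub, abs_mul, abs_pow, abs_neg, abs_one, one_pow, one_mul]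
      _ ≤ ∑ _ε : Fin n → Bool, α ^ k :=
          Finset.sum_le_sum fun ε _ => hcontr k _ (fun j => hverts ε j)
      _ = 2^n * α^k := by
          rw [Finset.sum_const, hcard, nsmul_eq_mul]
          push_cast
          ring
  have hge : ∀ k, -((2:ℝ)^n * α^k) ≤ nVol n Q lo hi := by
    intro k
    have h1 := abs_le.mp (hVdiff k)
    have h2 := hTkVol k lo hi hbox
    linarith [h1.1]
  have hlim : Filter.Tendsto (fun k => -((2:ℝ)^n * α^k)) Filter.atTop (nhds 0) := by
    have h := tendsto_pow_atTop_nhds_zero_of_lt_one hα0 hα1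
    have h2 := (h.const_mul ((2:ℝ)^n)).neg
    simpa using h2
  exact le_of_tendsto' hlim hge

end MainParts

/-- For `T ∈ T_Q` with contraction constant `α < 1` and `Q_T` the
`n`-quasi-copula with `T(Q_T) = Q_T`: `Q_T` is a proper `n`-quasi-copula (not an
`n`-copula) if and only if `T` has a negative entry. -/
theorem TApp_fixedPoint_proper_iff (n : ℕ) (hn : 2 ≤ n) (m : Fin n → ℕ)
    (a : Fin n → ℕ → ℝ) (hdiv : IsDivision n m a) (t : ((j : Fin n) → Fin (m j)) → ℝ)
    (hT : MemTQ n m a t) (α : ℝ)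
    (hα : IsGreatest {x : ℝ | ∃ i : (j : Fin n) → Fin (m j), x = alphaTerm n m t i} α)
    (hα1 : α < 1) (Q : (Fin n → ℝ) → ℝ) (hQ : IsNQuasiCopula n Q)
    (hfix : ∀ u : Fin n → ℝ, (∀ j, u j ∈ Icc (0:ℝ) 1) → TApp n m a t Q u = Q u) :
    ¬ IsNCopula n Q ↔ ∃ i, t i < 0 := by
  constructor
  · intro hnc
    by_contra hcon
    push_neg at hcon
    exact hnc (dir2 hn hdiv hT hα hα1 hQ hfix hcon)
  · rintro ⟨i₀, hi₀⟩
    exact dir1 hn hdiv hQ hfix i₀ hi₀
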